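/- Soundness of the trace-based Hoare logic: for any While statement s, state predicate U and setoid trace predicate P, if ⊢{U} s {P} is derivable, then for all states σ and traces τ, if U σ and (s,σ) ⇒ τ, then τ satisfies P. -/

import Mathlib

namespace WhileTrace

/-- Program variables. -/
abbrev Var := ℕ
/-- States assign integer values to variables. -/
abbrev State := Var → ℤ
/-- Arithmetic expressions, modelled by their integer value in each state. -/
abbrev Expr := State → ℤ

/-- State update `σ[x ↦ v]`. -/
def update (σ : State) (x : Var) (v : ℤ) : State := Function.update σ x v

/-- Reading an expression as a boolean: `σ ⊨ e`. -/
def istrue (e : Expr) (σ : State) : Prop := e σ ≠ 0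

/-- Traces: nonempty, possibly infinite sequences of states
(a head state together with a possibly infinite sequence of further states). -/
def Trace : Type := State × Stream'.Seq State

/-- The singleton trace `⟨σ⟩`. -/
def Trace.single (σ : State) : Trace := (σ, Stream'.Seq.nil)

/-- The cons trace `σ :: τ`. -/
def Trace.cons (σ : State) (τ : Trace) : Trace := (σ, Stream'.Seq.cons τ.1 τ.2)

/-- The first state of a trace. -/
def Trace.hd (τ : Trace) : State := τ.1

/-- Bisimilarity of traces `τ ≈ τ'`, as a greatest fixed point:
there is a relation `R` relating the two traces that is consistent with the
coinductive rules `⟨σ⟩ ≈ ⟨σ⟩` and `σ::τ ≈ σ::τ'` whenever `τ ≈ τ'`. -/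
def Bisim (τ τ' : Trace) : Prop :=
  ∃ R : Trace → Trace → Prop, R τ τ' ∧
    ∀ a b, R a b →
      (∃ σ, a = Trace.single σ ∧ b = Trace.single σ) ∨
      (∃ σ a' b', a = Trace.cons σ a' ∧ b = Trace.cons σ b' ∧ R a' b')

/-- Finiteness `τ ↓ σ` : `τ` is finite with last state `σ` (inductive). -/
inductive Converges : Trace → State → Prop
  | single (σ : State) : Converges (Trace.single σ) σ
  | cons (σ' : State) {τ : Trace} {σ : State} :
      Converges τ σ → Converges (Trace.cons σ' τ) σ

/-- Infiniteness of a trace (coinductive, as a greatest fixed point). -/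
def InfiniteT (τ : Trace) : Prop :=
  ∃ P : Trace → Prop, P τ ∧ ∀ a, P a → ∃ σ a', a = Trace.cons σ a' ∧ P a'

/-- Statements of the While language. -/
inductive Stmt : Type
  | assign (x : Var) (e : Expr)
  | skip
  | seq (s₀ s₁ : Stmt)
  | ifte (e : Expr) (st sf : Stmt)
  | whileDo (e : Expr) (st : Stmt)

/-- A pair of relations `(E, ES)` is consistent with the rules of evaluation
and extended evaluation: every claimed evaluation is backed by one of the
coinductive rules, with premises again in `(E, ES)`. -/
def EvalConsistent (E : Stmt → State → Trace → Prop)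
    (ES : Stmt → Trace → Trace → Prop) : Prop :=
  (∀ x e σ τ, E (.assign x e) σ τ →
      τ = Trace.cons σ (Trace.single (update σ x (e σ)))) ∧
  (∀ σ τ, E .skip σ τ → τ = Trace.single σ) ∧
  (∀ s₀ s₁ σ τ', E (.seq s₀ s₁) σ τ' → ∃ τ, E s₀ σ τ ∧ ES s₁ τ τ') ∧
  (∀ e st sf σ τ, E (.ifte e st sf) σ τ →
      (istrue e σ ∧ ES st (Trace.cons σ (Trace.single σ)) τ) ∨
      (¬ istrue e σ ∧ ES sf (Trace.cons σ (Trace.single σ)) τ)) ∧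
  (∀ e st σ τ', E (.whileDo e st) σ τ' →
      (istrue e σ ∧ ∃ τ, ES st (Trace.cons σ (Trace.single σ)) τ ∧
        ES (.whileDo e st) τ τ') ∨
      (¬ istrue e σ ∧ τ' = Trace.cons σ (Trace.single σ))) ∧
  (∀ s τ τ', ES s τ τ' →
      (∃ σ, τ = Trace.single σ ∧ E s σ τ') ∨
      (∃ σ τ₀ τ₀', τ = Trace.cons σ τ₀ ∧ τ' = Trace.cons σ τ₀' ∧ ES s τ₀ τ₀'))

/-- Evaluation `(s,σ) ⇒ τ` : greatest fixed point of the mutual coinductive rules. -/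
def Exec (s : Stmt) (σ : State) (τ : Trace) : Prop :=
  ∃ E ES, EvalConsistent E ES ∧ E s σ τ

/-- Extended evaluation `(s,τ) ⇒* τ'`. -/
def ExecSeq (s : Stmt) (τ τ' : Trace) : Prop :=
  ∃ E ES, EvalConsistent E ES ∧ ES s τ τ'

/-- The standard inductive state-based big-step semantics `(s,σ) ⇓ σ'`. -/
inductive BigStep : Stmt → State → State → Prop
  | assign (x : Var) (e : Expr) (σ : State) :
      BigStep (.assign x e) σ (update σ x (e σ))
  | skip (σ : State) : BigStep .skip σ σ
  | seq {s₀ s₁ : Stmt} {σ σ' σ'' : State} :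
      BigStep s₀ σ σ' → BigStep s₁ σ' σ'' → BigStep (.seq s₀ s₁) σ σ''
  | ifTrue {e : Expr} {st sf : Stmt} {σ σ' : State} :
      istrue e σ → BigStep st σ σ' → BigStep (.ifte e st sf) σ σ'
  | ifFalse {e : Expr} {st sf : Stmt} {σ σ' : State} :
      ¬ istrue e σ → BigStep sf σ σ' → BigStep (.ifte e st sf) σ σ'
  | whileTrue {e : Expr} {st : Stmt} {σ σ' σ'' : State} :
      istrue e σ → BigStep st σ σ' → BigStep (.whileDo e st) σ' σ'' →
      BigStep (.whileDo e st) σ σ''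
  | whileFalse {e : Expr} {st : Stmt} {σ : State} :
      ¬ istrue e σ → BigStep (.whileDo e st) σ σ

/-- State predicates. -/
abbrev StatePred := State → Prop
/-- Trace predicates. -/
abbrev TracePred := Trace → Prop

/-- A setoid trace predicate respects bisimilarity. -/
def IsSetoidPred (P : TracePred) : Prop := ∀ τ τ', P τ → Bisim τ τ' → P τ'

/-- The singleton predicate `[U]`. -/
def Sglt (U : StatePred) : TracePred :=
  fun τ => ∃ σ, U σ ∧ τ = Trace.single σ

/-- The doubleton predicate `⟨U⟩`. -/
def Dup (U : StatePred) : TracePred :=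
  fun τ => ∃ σ, U σ ∧ τ = Trace.cons σ (Trace.single σ)

/-- The update predicate `U[x ↦ e]`. -/
def UpdPred (U : StatePred) (x : Var) (e : Expr) : TracePred :=
  fun τ => ∃ σ, U σ ∧ τ = Trace.cons σ (Trace.single (update σ x (e σ)))

/-- `Q follows τ in τ'` (coinductive, as a greatest fixed point). -/
def Follows (Q : TracePred) (τ τ' : Trace) : Prop :=
  ∃ R : Trace → Trace → Prop, R τ τ' ∧
    ∀ a b, R a b →
      (∃ σ, a = Trace.single σ ∧ b.hd = σ ∧ Q b) ∨
      (∃ σ a' b', a = Trace.cons σ a' ∧ b = Trace.cons σ b' ∧ R a' b')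

/-- The chop `P ** Q`. -/
def Chop (P Q : TracePred) : TracePred :=
  fun τ' => ∃ τ, P τ ∧ Follows Q τ τ'

/-- The iteration `P*` (coinductive, as a greatest fixed point). -/
def Iter (P : TracePred) : TracePred := fun τ =>
  ∃ X : TracePred, X τ ∧
    ∀ a, X a → Sglt (fun _ => True) a ∨ ∃ τ₀, P τ₀ ∧ Follows X τ₀ a

/-- `Last P` : states that are the last state of some finite trace satisfying `P`. -/
def Last (P : TracePred) : StatePred := fun σ => ∃ τ, P τ ∧ Converges τ σ

/-- The trace predicate `finite`. -/
def FiniteT : TracePred := fun τ => ∃ σ, Converges τ σ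

/-- Derivability `⊢ {U} s {P}` in the trace-based Hoare logic. -/
inductive THoare : StatePred → Stmt → TracePred → Prop
  | assign (U : StatePred) (x : Var) (e : Expr) :
      THoare U (.assign x e) (UpdPred U x e)
  | skip (U : StatePred) : THoare U .skip (Sglt U)
  | seq {U V : StatePred} {s₀ s₁ : Stmt} {P Q : TracePred} :
      THoare U s₀ (Chop P (Sglt V)) → THoare V s₁ Q →
      THoare U (.seq s₀ s₁) (Chop P Q)
  | ifte {U : StatePred} {e : Expr} {st sf : Stmt} {P : TracePred} :
      THoare (fun σ => istrue e σ ∧ U σ) st P →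
      THoare (fun σ => ¬ istrue e σ ∧ U σ) sf P →
      THoare U (.ifte e st sf) (Chop (Dup U) P)
  | whileDo {U I : StatePred} {e : Expr} {st : Stmt} {P : TracePred} :
      (∀ σ, U σ → I σ) →
      THoare (fun σ => istrue e σ ∧ I σ) st (Chop P (Sglt I)) →
      THoare U (.whileDo e st)
        (Chop (Dup U)
          (Chop (Iter (Chop P (Dup I))) (Sglt (fun σ => ¬ istrue e σ))))
  | conseq {U U' : StatePred} {s : Stmt} {P P' : TracePred} :
      (∀ σ, U σ → U' σ) → THoare U' s P' → (∀ τ, P' τ → P τ) →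
      THoare U s P
  | exist {Z : Type} {U : Z → StatePred} {s : Stmt} {P : Z → TracePred} :
      (∀ z, THoare (U z) s (P z)) →
      THoare (fun σ => ∃ z, U z σ) s (fun τ => ∃ z, P z τ)

/-- Derivability `⊢p {U} s {Z}` in the state-based partial-correctness Hoare logic. -/
inductive PHoare : StatePred → Stmt → StatePred → Prop
  | assign (Z : StatePred) (x : Var) (e : Expr) :
      PHoare (fun σ => Z (update σ x (e σ))) (.assign x e) Z
  | skip (U : StatePred) : PHoare U .skip U
  | seq {U V Z : StatePred} {s₀ s₁ : Stmt} :
      PHoare U s₀ V → PHoare V s₁ Z → PHoare U (.seq s₀ s₁) Z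
  | ifte {U Z : StatePred} {e : Expr} {st sf : Stmt} :
      PHoare (fun σ => istrue e σ ∧ U σ) st Z →
      PHoare (fun σ => ¬ istrue e σ ∧ U σ) sf Z →
      PHoare U (.ifte e st sf) Z
  | whileDo {I : StatePred} {e : Expr} {st : Stmt} :
      PHoare (fun σ => istrue e σ ∧ I σ) st I →
      PHoare I (.whileDo e st) (fun σ => I σ ∧ ¬ istrue e σ)
  | exist {Z : Type} {U V : Z → StatePred} {s : Stmt} :
      (∀ z, PHoare (U z) s (V z)) →
      PHoare (fun σ => ∃ z, U z σ) s (fun σ => ∃ z, V z σ)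
  | conseq {U U' Z Z' : StatePred} {s : Stmt} :
      (∀ σ, U σ → U' σ) → PHoare U' s Z' → (∀ σ, Z' σ → Z σ) →
      PHoare U s Z

/-- Derivability `⊢t {U} s {Z}` in the state-based total-correctness Hoare
logic, with the `while-fun` rule. -/
inductive TotHoare : StatePred → Stmt → StatePred → Prop
  | assign (Z : StatePred) (x : Var) (e : Expr) :
      TotHoare (fun σ => Z (update σ x (e σ))) (.assign x e) Z
  | skip (U : StatePred) : TotHoare U .skip U
  | seq {U V Z : StatePred} {s₀ s₁ : Stmt} :
      TotHoare U s₀ V → TotHoare V s₁ Z → TotHoare U (.seq s₀ s₁) Z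
  | ifte {U Z : StatePred} {e : Expr} {st sf : Stmt} :
      TotHoare (fun σ => istrue e σ ∧ U σ) st Z →
      TotHoare (fun σ => ¬ istrue e σ ∧ U σ) sf Z →
      TotHoare U (.ifte e st sf) Z
  | whileFun {I : StatePred} {e : Expr} {st : Stmt} (t : State → ℕ) (m : ℕ) :
      (∀ n : ℕ, TotHoare (fun σ => istrue e σ ∧ I σ ∧ t σ = n) st
        (fun σ => I σ ∧ t σ < n)) →
      TotHoare (fun σ => I σ ∧ t σ = m) (.whileDo e st)
        (fun σ => I σ ∧ t σ ≤ m ∧ ¬ istrue e σ)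
  | exist {Z : Type} {U V : Z → StatePred} {s : Stmt} :
      (∀ z, TotHoare (U z) s (V z)) →
      TotHoare (fun σ => ∃ z, U z σ) s (fun σ => ∃ z, V z σ)
  | conseq {U U' Z Z' : StatePred} {s : Stmt} :
      (∀ σ, U σ → U' σ) → TotHoare U' s Z' → (∀ σ, Z' σ → Z σ) →
      TotHoare U s Z

/-!
Soundness is proved by induction on the derivation, for the semantic reading `Valid U s P` of a
triple. Coinduction enters twice. For sequential composition, a `[V]`-terminated prefix is glued
to an extended evaluation of `s₁`. For a loop with invariant `I`, the traces that are singletons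
or `P`-traces followed by runs of the loop from `I`-states form a post-fixed point of the
iteration `(P ** ⟨I⟩)*`; this needs chop to re-associate under `Follows`, which is shown by
induction when the prefix is finite and is trivial when it is infinite, because then the
continuation is never reached. Finally, the guard is false in the last state of every finite run
of the loop, which gives the closing `[¬e]`.
-/

namespace Trace

lemma single_ne_cons (σ σ' : State) (τ : Trace) : single σ ≠ cons σ' τ := fun h =>
  Stream'.Seq.nil_ne_cons (congrArg Prod.snd h)

@[simp]
lemma single_inj {σ σ' : State} : single σ = single σ' ↔ σ = σ' :=
  ⟨congrArg hd, congrArg single⟩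

@[simp]
lemma cons_inj {σ σ' : State} {τ τ' : Trace} : cons σ τ = cons σ' τ' ↔ σ = σ' ∧ τ = τ' := by
  refine ⟨fun h => ?_, fun ⟨hσ, hτ⟩ => hσ ▸ hτ ▸ rfl⟩
  obtain ⟨hhd, htl⟩ := Stream'.Seq.cons_injective2 (congrArg Prod.snd h)
  exact ⟨congrArg Prod.fst h, Prod.ext hhd htl⟩

lemma eq_single_or_eq_cons (τ : Trace) : (∃ σ, τ = single σ) ∨ ∃ σ τ', τ = cons σ τ' := by
  obtain ⟨σ, s⟩ := τ
  induction s using Stream'.Seq.recOn with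
  | nil => exact Or.inl ⟨σ, rfl⟩
  | cons x s => exact Or.inr ⟨σ, (x, s), rfl⟩

end Trace

open Trace

lemma Converges.eq_of_single {σ ρ : State} (h : Converges (Trace.single σ) ρ) : ρ = σ := by
  generalize hτ : Trace.single σ = τ at h
  cases h with
  | single => exact (single_inj.mp hτ).symm
  | cons => exact absurd hτ (single_ne_cons _ _ _)

section Semantics

lemma evalConsistent_exec : EvalConsistent Exec ExecSeq := by
  refine ⟨?_, ?_, ?_, ?_, ?_, ?_⟩
  · rintro x e σ τ ⟨E, ES, hc, h⟩
    exact hc.1 x e σ τ h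
  · rintro σ τ ⟨E, ES, hc, h⟩
    exact hc.2.1 σ τ h
  · rintro s₀ s₁ σ τ' ⟨E, ES, hc, h⟩
    obtain ⟨τ, h₀, h₁⟩ := hc.2.2.1 s₀ s₁ σ τ' h
    exact ⟨τ, ⟨E, ES, hc, h₀⟩, ⟨E, ES, hc, h₁⟩⟩
  · rintro e st sf σ τ ⟨E, ES, hc, h⟩
    rcases hc.2.2.2.1 e st sf σ τ h with ⟨he, h'⟩ | ⟨he, h'⟩
    · exact Or.inl ⟨he, E, ES, hc, h'⟩
    · exact Or.inr ⟨he, E, ES, hc, h'⟩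
  · rintro e st σ τ' ⟨E, ES, hc, h⟩
    rcases hc.2.2.2.2.1 e st σ τ' h with ⟨he, τ, h₀, h₁⟩ | hexit
    · exact Or.inl ⟨he, τ, ⟨E, ES, hc, h₀⟩, ⟨E, ES, hc, h₁⟩⟩
    · exact Or.inr hexit
  · rintro s τ τ' ⟨E, ES, hc, h⟩
    rcases hc.2.2.2.2.2 s τ τ' h with ⟨σ, h₀, h₁⟩ | ⟨σ, τ₀, τ₀', h₀, h₁, h₂⟩
    · exact Or.inl ⟨σ, h₀, E, ES, hc, h₁⟩
    · exact Or.inr ⟨σ, τ₀, τ₀', h₀, h₁, E, ES, hc, h₂⟩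

variable {s : Stmt} {σ : State} {τ τ' : Trace}

lemma Exec.assign_inv {x : Var} {e : Expr} (h : Exec (.assign x e) σ τ) :
    τ = cons σ (single (update σ x (e σ))) :=
  evalConsistent_exec.1 x e σ τ h

lemma Exec.skip_inv (h : Exec .skip σ τ) : τ = single σ :=
  evalConsistent_exec.2.1 σ τ h

lemma Exec.seq_inv {s₀ s₁ : Stmt} (h : Exec (.seq s₀ s₁) σ τ') :
    ∃ τ, Exec s₀ σ τ ∧ ExecSeq s₁ τ τ' :=
  evalConsistent_exec.2.2.1 s₀ s₁ σ τ' h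

lemma Exec.ifte_inv {e : Expr} {st sf : Stmt} (h : Exec (.ifte e st sf) σ τ) :
    (istrue e σ ∧ ExecSeq st (cons σ (single σ)) τ) ∨
      (¬ istrue e σ ∧ ExecSeq sf (cons σ (single σ)) τ) :=
  evalConsistent_exec.2.2.2.1 e st sf σ τ h

lemma Exec.whileDo_inv {e : Expr} {st : Stmt} (h : Exec (.whileDo e st) σ τ') :
    (istrue e σ ∧ ∃ τ, ExecSeq st (cons σ (single σ)) τ ∧ ExecSeq (.whileDo e st) τ τ') ∨
      (¬ istrue e σ ∧ τ' = cons σ (single σ)) :=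
  evalConsistent_exec.2.2.2.2.1 e st σ τ' h

lemma ExecSeq.single_inv (h : ExecSeq s (single σ) τ') : Exec s σ τ' := by
  rcases evalConsistent_exec.2.2.2.2.2 s _ τ' h with ⟨σ', hσ, h'⟩ | ⟨_, _, _, hcons, _⟩
  · rwa [single_inj.mp hσ]
  · exact absurd hcons (single_ne_cons _ _ _)

lemma ExecSeq.cons_inv (h : ExecSeq s (cons σ τ) τ') :
    ∃ τ₁, τ' = cons σ τ₁ ∧ ExecSeq s τ τ₁ := by
  rcases evalConsistent_exec.2.2.2.2.2 s _ τ' h with ⟨_, hsingle, _⟩ | ⟨σ', τ₀, τ₁, hcons, rfl, h'⟩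
  · exact absurd hsingle.symm (single_ne_cons _ _ _)
  · obtain ⟨rfl, rfl⟩ := cons_inj.mp hcons
    exact ⟨τ₁, rfl, h'⟩

lemma ExecSeq.doubleton_inv (h : ExecSeq s (cons σ (single σ)) τ) :
    ∃ τ₁, τ = cons σ τ₁ ∧ Exec s σ τ₁ := by
  obtain ⟨τ₁, rfl, h₁⟩ := h.cons_inv
  exact ⟨τ₁, rfl, h₁.single_inv⟩

lemma Exec.hd_eq (h : Exec s σ τ) : τ.hd = σ := by
  induction s generalizing σ τ with
  | assign x e => rw [h.assign_inv]; rfl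
  | skip => rw [h.skip_inv]; rfl
  | seq s₀ s₁ ih₀ ih₁ =>
    obtain ⟨τ₀, h₀, h₁⟩ := h.seq_inv
    rcases eq_single_or_eq_cons τ₀ with ⟨ρ, rfl⟩ | ⟨ρ, τ₁, rfl⟩
    · obtain rfl : ρ = σ := ih₀ h₀
      exact ih₁ h₁.single_inv
    · obtain rfl : ρ = σ := ih₀ h₀
      obtain ⟨_, rfl, _⟩ := h₁.cons_inv
      rfl
  | ifte e st sf =>
    rcases h.ifte_inv with ⟨_, h'⟩ | ⟨_, h'⟩ <;>
      · obtain ⟨_, rfl, _⟩ := h'.cons_inv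
        rfl
  | whileDo e st =>
    rcases h.whileDo_inv with ⟨_, _, h₀, h₁⟩ | ⟨_, rfl⟩
    · obtain ⟨_, rfl, _⟩ := h₀.cons_inv
      obtain ⟨_, rfl, _⟩ := h₁.cons_inv
      rfl
    · rfl

end Semantics

section Follows

variable {Q Q' X : TracePred} {p a b : Trace}

lemma Follows.destruct (h : Follows Q a b) :
    (∃ σ, a = single σ ∧ b.hd = σ ∧ Q b) ∨
      ∃ σ a' b', a = cons σ a' ∧ b = cons σ b' ∧ Follows Q a' b' := by
  obtain ⟨R, hab, hR⟩ := h
  rcases hR a b hab with hend | ⟨σ, a', b', rfl, rfl, h'⟩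
  · exact Or.inl hend
  · exact Or.inr ⟨σ, a', b', rfl, rfl, R, h', hR⟩

lemma Follows.coind (R : Trace → Trace → Prop)
    (hR : ∀ a b, R a b → (∃ σ, a = single σ ∧ b.hd = σ ∧ Q b) ∨
      ∃ σ a' b', a = cons σ a' ∧ b = cons σ b' ∧ (R a' b' ∨ Follows Q a' b'))
    (h : R a b) : Follows Q a b := by
  refine ⟨fun x y => R x y ∨ Follows Q x y, Or.inl h, ?_⟩
  rintro x y (hxy | hxy)
  · exact hR x y hxy
  · rcases hxy.destruct with hend | ⟨σ, x', y', rfl, rfl, h'⟩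
    · exact Or.inl hend
    · exact Or.inr ⟨σ, x', y', rfl, rfl, Or.inr h'⟩

lemma follows_single {σ : State} (hhd : b.hd = σ) (hb : Q b) : Follows Q (single σ) b :=
  ⟨fun x y => x = single σ ∧ y = b, ⟨rfl, rfl⟩, by
    rintro x y ⟨rfl, rfl⟩
    exact Or.inl ⟨σ, rfl, hhd, hb⟩⟩

lemma Follows.cons {σ : State} (h : Follows Q a b) : Follows Q (cons σ a) (cons σ b) :=
  Follows.coind (fun x y => x = Trace.cons σ a ∧ y = Trace.cons σ b)
    (by rintro x y ⟨rfl, rfl⟩; exact Or.inr ⟨σ, a, b, rfl, rfl, Or.inr h⟩) ⟨rfl, rfl⟩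

lemma Follows.hd_eq (h : Follows Q a b) : b.hd = a.hd := by
  rcases h.destruct with ⟨σ, rfl, hhd, _⟩ | ⟨σ, a', b', rfl, rfl, _⟩
  · exact hhd
  · rfl

lemma follows_self (h : ∀ ρ, Converges b ρ → Q (single ρ)) : Follows Q b b := by
  refine Follows.coind (fun x y => x = y ∧ ∀ ρ, Converges x ρ → Q (single ρ)) ?_ ⟨rfl, h⟩
  rintro x _ ⟨rfl, hx⟩
  rcases eq_single_or_eq_cons x with ⟨σ, rfl⟩ | ⟨σ, x', rfl⟩
  · exact Or.inl ⟨σ, rfl, rfl, hx σ (.single σ)⟩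
  · exact Or.inr ⟨σ, x', x', rfl, rfl, Or.inl ⟨rfl, fun ρ hρ => hx ρ (hρ.cons σ)⟩⟩

lemma Follows.of_not_converges (hp : ∀ ρ, ¬ Converges p ρ) (h : Follows Q p a) :
    Follows Q' p a := by
  refine Follows.coind (fun x y => Follows Q x y ∧ ∀ ρ, ¬ Converges x ρ) ?_ ⟨h, hp⟩
  rintro x y ⟨hxy, hx⟩
  rcases hxy.destruct with ⟨σ, rfl, _, _⟩ | ⟨σ, x', y', rfl, rfl, h'⟩
  · exact absurd (.single σ) (hx σ)
  · exact Or.inr ⟨σ, x', y', rfl, rfl, Or.inl ⟨h', fun ρ hρ => hx ρ (hρ.cons σ)⟩⟩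

lemma Converges.exists_of_follows {ρ : State} (ha : Converges a ρ) (h : Follows Q p a) :
    ∃ ρ', Converges p ρ' := by
  induction ha generalizing p with
  | single σ =>
    rcases h.destruct with ⟨σ', rfl, _, _⟩ | ⟨_, _, _, _, hcons, _⟩
    · exact ⟨σ', .single σ'⟩
    · exact absurd hcons (single_ne_cons _ _ _)
  | cons σ _ ih =>
    rcases h.destruct with ⟨σ', rfl, _, _⟩ | ⟨_, p', _, rfl, hcons, h'⟩
    · exact ⟨σ', .single σ'⟩
    · obtain ⟨ρ', hρ'⟩ := ih ((cons_inj.mp hcons).2 ▸ h')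
      exact ⟨ρ', hρ'.cons _⟩

/-- Re-association of chop under `Follows`. -/
lemma Follows.exists_split (hQ : ∀ c, Q c → Chop Q' X c) (h : Follows Q p a) :
    ∃ t, Follows Q' p t ∧ Follows X t a := by
  by_cases hp : ∃ ρ, Converges p ρ
  · obtain ⟨ρ, hp⟩ := hp
    induction hp generalizing a with
    | single σ =>
      rcases h.destruct with ⟨_, hσ, hhd, hQa⟩ | ⟨_, _, _, hcons, _, _⟩
      · obtain ⟨d, hd, hfol⟩ := hQ a hQa
        obtain rfl := single_inj.mp hσ
        exact ⟨d, follows_single (hfol.hd_eq.symm.trans hhd) hd, hfol⟩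
      · exact absurd hcons (single_ne_cons _ _ _)
    | cons σ _ ih =>
      rcases h.destruct with ⟨_, hsingle, _, _⟩ | ⟨_, _, a', hcons, rfl, h'⟩
      · exact absurd hsingle.symm (single_ne_cons _ _ _)
      · obtain ⟨rfl, rfl⟩ := cons_inj.mp hcons
        obtain ⟨t, hpt, hta⟩ := ih h'
        exact ⟨Trace.cons _ t, hpt.cons, hta.cons⟩
  · push Not at hp
    have ha : ∀ ρ, ¬ Converges a ρ := fun ρ ha => (ha.exists_of_follows h).elim hp
    exact ⟨a, h.of_not_converges hp, follows_self fun ρ hρ => absurd hρ (ha ρ)⟩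

lemma chop_dup_cons {U : StatePred} {P : TracePred} {σ : State} {τ : Trace} (hU : U σ)
    (hhd : τ.hd = σ) (hP : P τ) : Chop (Dup U) P (cons σ τ) :=
  ⟨cons σ (single σ), ⟨σ, hU, rfl⟩, (follows_single hhd hP).cons⟩

end Follows

/-- Semantic validity `⊨ {U} s {P}` of a trace-based Hoare triple. -/
def Valid (U : StatePred) (s : Stmt) (P : TracePred) : Prop :=
  ∀ σ τ, U σ → Exec s σ τ → P τ

lemma Follows.execSeq {V : StatePred} {s : Stmt} {Q : TracePred} {τ₀ τ τ' : Trace}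
    (hs : Valid V s Q) (hf : Follows (Sglt V) τ₀ τ) (hexec : ExecSeq s τ τ') :
    Follows Q τ₀ τ' := by
  refine Follows.coind (fun x y => ∃ c, Follows (Sglt V) x c ∧ ExecSeq s c y) ?_ ⟨τ, hf, hexec⟩
  rintro x y ⟨c, hxc, hcy⟩
  rcases hxc.destruct with ⟨σ, rfl, rfl, σ', hV, rfl⟩ | ⟨σ, x', c', rfl, rfl, h'⟩
  · have hy := hcy.single_inv
    exact Or.inl ⟨σ', rfl, hy.hd_eq, hs σ' y hV hy⟩
  · obtain ⟨y', rfl, hy'⟩ := hcy.cons_inv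
    exact Or.inr ⟨σ, x', y', rfl, rfl, Or.inl ⟨c', h', hy'⟩⟩

section Rules

variable {U : StatePred} {s : Stmt} {P : TracePred}

lemma valid_assign (x : Var) (e : Expr) : Valid U (.assign x e) (UpdPred U x e) :=
  fun σ _ hU h => ⟨σ, hU, h.assign_inv⟩

lemma valid_skip : Valid U .skip (Sglt U) :=
  fun σ _ hU h => ⟨σ, hU, h.skip_inv⟩

lemma Valid.seq {V : StatePred} {s₀ s₁ : Stmt} {Q : TracePred} (h₀ : Valid U s₀ (Chop P (Sglt V)))
    (h₁ : Valid V s₁ Q) : Valid U (.seq s₀ s₁) (Chop P Q) := by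
  intro σ τ' hU h
  obtain ⟨τ, hs₀, hs₁⟩ := h.seq_inv
  obtain ⟨τ₀, hP, hf⟩ := h₀ σ τ hU hs₀
  exact ⟨τ₀, hP, hf.execSeq h₁ hs₁⟩

lemma Valid.ifte {e : Expr} {st sf : Stmt} (ht : Valid (fun σ => istrue e σ ∧ U σ) st P)
    (hf : Valid (fun σ => ¬ istrue e σ ∧ U σ) sf P) :
    Valid U (.ifte e st sf) (Chop (Dup U) P) := by
  intro σ τ hU h
  rcases h.ifte_inv with ⟨he, h'⟩ | ⟨he, h'⟩
  · obtain ⟨τ₁, rfl, hst⟩ := h'.doubleton_inv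
    exact chop_dup_cons hU hst.hd_eq (ht σ τ₁ ⟨he, hU⟩ hst)
  · obtain ⟨τ₁, rfl, hsf⟩ := h'.doubleton_inv
    exact chop_dup_cons hU hsf.hd_eq (hf σ τ₁ ⟨he, hU⟩ hsf)

lemma Valid.conseq {U' : StatePred} {P' : TracePred} (h : Valid U' s P') (hU : ∀ σ, U σ → U' σ)
    (hP : ∀ τ, P' τ → P τ) : Valid U s P :=
  fun σ τ hσ hexec => hP τ (h σ τ (hU σ hσ) hexec)

lemma valid_exists {Z : Type} {U : Z → StatePred} {P : Z → TracePred}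
    (h : ∀ z, Valid (U z) s (P z)) : Valid (fun σ => ∃ z, U z σ) s (fun τ => ∃ z, P z τ) := by
  rintro σ τ ⟨z, hU⟩ hexec
  exact ⟨z, h z σ τ hU hexec⟩

end Rules

section WhileLoop

variable {e : Expr} {st : Stmt} {I : StatePred} {P : TracePred}

def WhileRuns (I : StatePred) (e : Expr) (st : Stmt) : TracePred :=
  fun τ => ∃ ρ, I ρ ∧ Exec (.whileDo e st) ρ τ

lemma guard_false_of_converges_whileDo {ρ : State} {τ : Trace} (hτ : Converges τ ρ) :
    (∀ σ, Exec (.whileDo e st) σ τ → ¬ istrue e ρ) ∧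
      ∀ τ₀, ExecSeq (.whileDo e st) τ₀ τ → ¬ istrue e ρ := by
  induction hτ with
  | single σ₀ =>
    have hexec : ∀ σ, Exec (.whileDo e st) σ (single σ₀) → ¬ istrue e σ₀ := by
      intro σ h
      rcases h.whileDo_inv with ⟨_, _, h₀, h₁⟩ | ⟨_, hcons⟩
      · obtain ⟨_, rfl, _⟩ := h₀.cons_inv
        obtain ⟨_, hcons, _⟩ := h₁.cons_inv
        exact absurd hcons (single_ne_cons _ _ _)
      · exact absurd hcons (single_ne_cons _ _ _)
    refine ⟨hexec, fun τ₀ h => ?_⟩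
    rcases eq_single_or_eq_cons τ₀ with ⟨σ, rfl⟩ | ⟨σ, _, rfl⟩
    · exact hexec σ h.single_inv
    · obtain ⟨_, hcons, _⟩ := h.cons_inv
      exact absurd hcons (single_ne_cons _ _ _)
  | @cons σ' τ ρ hτ ih =>
    have hexec : ∀ σ, Exec (.whileDo e st) σ (cons σ' τ) → ¬ istrue e ρ := by
      intro σ h
      rcases h.whileDo_inv with ⟨_, _, h₀, h₁⟩ | ⟨hguard, hcons⟩
      · obtain ⟨τ₁, rfl, _⟩ := h₀.cons_inv
        obtain ⟨_, hcons, h₁'⟩ := h₁.cons_inv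
        obtain ⟨rfl, rfl⟩ := cons_inj.mp hcons
        exact ih.2 τ₁ h₁'
      · obtain ⟨rfl, rfl⟩ := cons_inj.mp hcons
        rwa [hτ.eq_of_single]
    refine ⟨hexec, fun τ₀ h => ?_⟩
    rcases eq_single_or_eq_cons τ₀ with ⟨σ, rfl⟩ | ⟨σ, τ₁, rfl⟩
    · exact hexec σ h.single_inv
    · obtain ⟨_, hcons, h'⟩ := h.cons_inv
      obtain ⟨rfl, rfl⟩ := cons_inj.mp hcons
      exact ih.2 τ₁ h'

lemma Valid.whileDo_unfold (hbody : Valid (fun σ => istrue e σ ∧ I σ) st (Chop P (Sglt I)))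
    {ρ : State} {τ : Trace} (hI : I ρ) (h : Exec (.whileDo e st) ρ τ) :
    ∃ τ₁, τ = cons ρ τ₁ ∧ τ₁.hd = ρ ∧
      (Sglt (fun _ => True) τ₁ ∨ Chop P (WhileRuns I e st) τ₁) := by
  rcases h.whileDo_inv with ⟨he, τ₀, h₀, h₁⟩ | ⟨_, rfl⟩
  · obtain ⟨τ₀, rfl, hst⟩ := h₀.doubleton_inv
    obtain ⟨p, hp, hf⟩ := hbody ρ τ₀ ⟨he, hI⟩ hst
    obtain ⟨τ₁, rfl, hrest⟩ := h₁.cons_inv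
    have hf' : Follows (WhileRuns I e st) p τ₁ :=
      hf.execSeq (fun σ b hσ hb => ⟨σ, hσ, hb⟩) hrest
    refine ⟨τ₁, rfl, ?_, Or.inr ⟨p, hp, hf'⟩⟩
    rw [hf'.hd_eq, ← hf.hd_eq, hst.hd_eq]
  · exact ⟨single ρ, rfl, rfl, Or.inl ⟨ρ, trivial, rfl⟩⟩

lemma Valid.iter_of_whileDo (hbody : Valid (fun σ => istrue e σ ∧ I σ) st (Chop P (Sglt I)))
    {τ : Trace} (hτ : Sglt (fun _ => True) τ ∨ Chop P (WhileRuns I e st) τ) :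
    Iter (Chop P (Dup I)) τ := by
  refine ⟨fun a => Sglt (fun _ => True) a ∨ Chop P (WhileRuns I e st) a, hτ, ?_⟩
  rintro a (hsingle | ⟨p, hp, hf⟩)
  · exact Or.inl hsingle
  · have hrun : ∀ c, WhileRuns I e st c →
        Chop (Dup I) (fun a => Sglt (fun _ => True) a ∨ Chop P (WhileRuns I e st) a) c := by
      rintro c ⟨ρ, hI, hc⟩
      obtain ⟨c₁, rfl, hhd, hc₁⟩ := hbody.whileDo_unfold hI hc
      exact chop_dup_cons hI hhd hc₁
    obtain ⟨t, hpt, hta⟩ := hf.exists_split hrun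
    exact Or.inr ⟨t, ⟨p, hp, hpt⟩, hta⟩

lemma Valid.whileDo {U : StatePred} (hUI : ∀ σ, U σ → I σ)
    (hbody : Valid (fun σ => istrue e σ ∧ I σ) st (Chop P (Sglt I))) :
    Valid U (.whileDo e st)
      (Chop (Dup U) (Chop (Iter (Chop P (Dup I))) (Sglt (fun σ => ¬ istrue e σ)))) := by
  intro σ τ hU h
  obtain ⟨τ₁, rfl, hhd, hτ₁⟩ := hbody.whileDo_unfold (hUI σ hU) h
  have hexit : ∀ ρ, Converges τ₁ ρ → Sglt (fun σ => ¬ istrue e σ) (single ρ) :=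
    fun ρ hρ => ⟨ρ, (guard_false_of_converges_whileDo (hρ.cons σ)).1 σ h, rfl⟩
  exact chop_dup_cons hU hhd ⟨τ₁, hbody.iter_of_whileDo hτ₁, follows_self hexit⟩

end WhileLoop

theorem tHoare_sound_general (s : Stmt) (U : StatePred) (P : TracePred)
    (h : THoare U s P) :
    ∀ (σ : State) (τ : Trace), U σ → Exec s σ τ → P τ := by
  induction h with
  | assign U x e => exact valid_assign x e
  | skip U => exact valid_skip
  | seq _ _ ih₀ ih₁ => exact Valid.seq ih₀ ih₁
  | ifte _ _ iht ihf => exact Valid.ifte iht ihf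
  | whileDo hUI _ ih => exact Valid.whileDo hUI ih
  | conseq hU _ hP ih => exact Valid.conseq ih hU hP
  | exist _ ih => exact valid_exists ih

/-- Soundness of the trace-based Hoare logic. -/
theorem tHoare_sound (s : Stmt) (U : StatePred) (P : TracePred)
    (hP : IsSetoidPred P) (h : THoare U s P) :
    ∀ (σ : State) (τ : Trace), U σ → Exec s σ τ → P τ :=
  tHoare_sound_general s U P h

end WhileTrace
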